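/- Let V < 0 be continuous, t > 0, x ≥ x', |x| ≥ |x'|, and Φ(λ) = −tλ² + ∫_{x'}^x √(λ²−V(s)) ds. Suppose λ ranges over K = {0 < λ ≤ R⟨x⟩^{-μ/2}} and let M₁, M₂, c₂ be as above with c₂M₁ ≤ ∫_{x'}^x (λ²−V(s))^{-1/2}ds on K. If t > M₁/2, then with m := 2c₂^{-1}(M₁−2t)/M₂ < 0, one has |Φ'(λ)| ≥ (c₂/2)M₂ λ(λ² − m) and |Φ''(λ)| ≲ M₂(λ² + |m|) for all λ ∈ K. -/

import Mathlib

/-!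
Differentiating under the integral, `Φ'(λ) = λ (I(λ) - 2t)` and
`Φ''(λ) = I(λ) - 2t - λ² J(λ)`, where `I`, `J` integrate `(λ² - V)^(-1/2)` and
`(λ² - V)^(-3/2)`. Since `M₁ = I(0)`, convexity of `y ↦ y^(-1/2)` squeezes `M₁ - I(λ)`
between `(λ²/2) ∫ |V| (λ² - V)^(-5/2) ≥ (c₂/2) M₂ λ²` and `(λ²/2) M₂`. As
`(c₂/2) M₂ m = M₁ - 2t`, the lower bound gives `2t - I(λ) ≥ (c₂/2) M₂ (λ² - m)`, and the
upper one bounds `|Φ''(λ)|` by `(2t - M₁) + (3/2) M₂ λ²`.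
-/

open Set intervalIntegral

theorem rpow_neg_half_eq_inv_sqrt {a : ℝ} (ha : 0 ≤ a) : a ^ (-(1:ℝ)/2) = (√a)⁻¹ := by
  rw [Real.sqrt_eq_rpow, ← Real.rpow_neg ha]
  norm_num

theorem rpow_neg_three_half_eq_inv_sqrt_pow {a : ℝ} (ha : 0 ≤ a) :
    a ^ (-(3:ℝ)/2) = (√a ^ 3)⁻¹ := by
  rw [Real.sqrt_eq_rpow, ← Real.rpow_natCast, ← Real.rpow_mul ha, ← Real.rpow_neg ha]
  norm_num

-- Tangent-line bounds for the convex function `y ↦ y^(-1/2)` at `b` and at `a`.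
theorem sub_div_two_mul_rpow_le_rpow_neg_half_sub {a b : ℝ} (ha : 0 < a) (hab : a ≤ b) :
    (b - a) / 2 * b ^ (-(3:ℝ)/2) ≤ a ^ (-(1:ℝ)/2) - b ^ (-(1:ℝ)/2) := by
  have hb : 0 < b := ha.trans_le hab
  rw [rpow_neg_half_eq_inv_sqrt ha.le, rpow_neg_half_eq_inv_sqrt hb.le,
    rpow_neg_three_half_eq_inv_sqrt_pow hb.le]
  obtain ⟨A, hA, rfl⟩ : ∃ A, 0 < A ∧ A ^ 2 = a :=
    ⟨√a, Real.sqrt_pos.2 ha, Real.sq_sqrt ha.le⟩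
  obtain ⟨B, hB, rfl⟩ : ∃ B, 0 < B ∧ B ^ 2 = b :=
    ⟨√b, Real.sqrt_pos.2 hb, Real.sq_sqrt hb.le⟩
  have hAB : A ≤ B := (pow_le_pow_iff_left₀ hA.le hB.le two_ne_zero).1 hab
  rw [Real.sqrt_sq hA.le, Real.sqrt_sq hB.le, inv_sub_inv hA.ne' hB.ne',
    ← div_eq_mul_inv, div_div, div_le_div_iff₀ (by positivity) (by positivity)]
  nlinarith [mul_nonneg (mul_nonneg hB.le (sq_nonneg (B - A)))
    (by linarith : (0:ℝ) ≤ 2 * B + A)]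

theorem rpow_neg_half_sub_le_sub_div_two_mul_rpow {a b : ℝ} (ha : 0 < a) (hab : a ≤ b) :
    a ^ (-(1:ℝ)/2) - b ^ (-(1:ℝ)/2) ≤ (b - a) / 2 * a ^ (-(3:ℝ)/2) := by
  have hb : 0 < b := ha.trans_le hab
  rw [rpow_neg_half_eq_inv_sqrt ha.le, rpow_neg_half_eq_inv_sqrt hb.le,
    rpow_neg_three_half_eq_inv_sqrt_pow ha.le]
  obtain ⟨A, hA, rfl⟩ : ∃ A, 0 < A ∧ A ^ 2 = a :=
    ⟨√a, Real.sqrt_pos.2 ha, Real.sq_sqrt ha.le⟩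
  obtain ⟨B, hB, rfl⟩ : ∃ B, 0 < B ∧ B ^ 2 = b :=
    ⟨√b, Real.sqrt_pos.2 hb, Real.sq_sqrt hb.le⟩
  have hAB : A ≤ B := (pow_le_pow_iff_left₀ hA.le hB.le two_ne_zero).1 hab
  rw [Real.sqrt_sq hA.le, Real.sqrt_sq hB.le, inv_sub_inv hA.ne' hB.ne',
    ← div_eq_mul_inv, div_div, div_le_div_iff₀ (by positivity) (by positivity)]
  nlinarith [mul_nonneg (mul_nonneg hA.le (sq_nonneg (B - A)))
    (by linarith : (0:ℝ) ≤ B + 2 * A)]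

theorem mul_rpow_sub_one_le_rpow {a b : ℝ} (hb : 0 < b) (hab : a ≤ b) (p : ℝ) :
    a * b ^ (p - 1) ≤ b ^ p := by
  calc a * b ^ (p - 1) ≤ b * b ^ (p - 1) := by gcongr
    _ = b ^ p := by rw [Real.rpow_sub_one hb.ne']; field_simp

section

variable {V : ℝ → ℝ} {a b : ℝ}

theorem sq_sub_pos (hneg : ∀ s, V s < 0) (l s : ℝ) : 0 < l ^ 2 - V s := by
  nlinarith [hneg s, sq_nonneg l]

theorem abs_le_sq_sub (hneg : ∀ s, V s < 0) (l s : ℝ) : |V s| ≤ l ^ 2 - V s := by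
  rw [abs_of_neg (hneg s)]; nlinarith [sq_nonneg l]

theorem continuous_sq_sub_rpow (hVc : Continuous V) (hneg : ∀ s, V s < 0) (l p : ℝ) :
    Continuous fun s => (l ^ 2 - V s) ^ p :=
  (continuous_const.sub hVc).rpow_const fun s => Or.inl (sq_sub_pos hneg l s).ne'

theorem continuous_abs_rpow (hVc : Continuous V) (hneg : ∀ s, V s < 0) (p : ℝ) :
    Continuous fun s => |V s| ^ p :=
  hVc.abs.rpow_const fun s => Or.inl (abs_ne_zero.2 (hneg s).ne)

theorem hasDerivAt_integral_sq_sub_rpow (hVc : Continuous V) (hneg : ∀ s, V s < 0)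
    {p : ℝ} (hp : p ≤ 1) (l : ℝ) :
    HasDerivAt (fun k => ∫ s in a..b, (k ^ 2 - V s) ^ p)
      (2 * p * l * ∫ s in a..b, (l ^ 2 - V s) ^ (p - 1)) l := by
  have hderiv (s k : ℝ) :
      HasDerivAt (fun k => (k ^ 2 - V s) ^ p) (2 * p * k * (k ^ 2 - V s) ^ (p - 1)) k := by
    convert ((hasDerivAt_pow 2 k).sub_const (V s)).rpow_const
      (Or.inl (sq_sub_pos hneg k s).ne') using 1
    push_cast; ring
  have hbound (s k : ℝ) (hk : k ∈ Metric.ball l 1) :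
      ‖2 * p * k * (k ^ 2 - V s) ^ (p - 1)‖ ≤ 2 * |p| * (|l| + 1) * |V s| ^ (p - 1) := by
    have hkl : |k| ≤ |l| + 1 := by
      have := abs_sub_abs_le_abs_sub k l
      rw [Metric.mem_ball, Real.dist_eq] at hk
      linarith
    have hpow : (k ^ 2 - V s) ^ (p - 1) ≤ |V s| ^ (p - 1) :=
      Real.rpow_le_rpow_of_nonpos (abs_pos.2 (hneg s).ne) (abs_le_sq_sub hneg k s) (by linarith)
    rw [Real.norm_eq_abs, abs_mul, abs_mul, abs_mul, abs_two,
      abs_of_pos (Real.rpow_pos_of_pos (sq_sub_pos hneg k s) _)]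
    have := (Real.rpow_pos_of_pos (sq_sub_pos hneg k s) (p - 1)).le
    gcongr
  rw [← integral_const_mul]
  exact (hasDerivAt_integral_of_dominated_loc_of_deriv_le (Metric.ball_mem_nhds l one_pos)
    (.of_forall fun k => (continuous_sq_sub_rpow hVc hneg k p).aestronglyMeasurable)
    ((continuous_sq_sub_rpow hVc hneg l p).intervalIntegrable _ _)
    ((continuous_const.mul (continuous_sq_sub_rpow hVc hneg l _)).aestronglyMeasurable)
    (.of_forall fun s _ => hbound s)
    ((continuous_const.mul (continuous_abs_rpow hVc hneg _)).intervalIntegrable _ _)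
    (.of_forall fun s _ k _ => hderiv s k)).2

theorem deriv_phase (hVc : Continuous V) (hneg : ∀ s, V s < 0) (t : ℝ) :
    deriv (fun l => -t * l ^ 2 + ∫ s in a..b, √(l ^ 2 - V s)) =
      fun l => l * ((∫ s in a..b, (l ^ 2 - V s) ^ (-(1:ℝ)/2)) - 2 * t) := by
  funext l
  have hS := hasDerivAt_integral_sq_sub_rpow hVc hneg (a := a) (b := b) (p := 1/2)
    (by norm_num) l
  simp only [← Real.sqrt_eq_rpow, show (1/2:ℝ) - 1 = -(1:ℝ)/2 by norm_num] at hS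
  refine (((hasDerivAt_pow 2 l).const_mul (-t)).add hS).deriv.trans ?_
  push_cast
  ring

theorem deriv_deriv_phase (hVc : Continuous V) (hneg : ∀ s, V s < 0) (t l : ℝ) :
    deriv (deriv fun l => -t * l ^ 2 + ∫ s in a..b, √(l ^ 2 - V s)) l =
      (∫ s in a..b, (l ^ 2 - V s) ^ (-(1:ℝ)/2)) - 2 * t
        - l ^ 2 * ∫ s in a..b, (l ^ 2 - V s) ^ (-(3:ℝ)/2) := by
  have hI := hasDerivAt_integral_sq_sub_rpow hVc hneg (a := a) (b := b) (p := -(1:ℝ)/2)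
    (by norm_num) l
  rw [show -(1:ℝ)/2 - 1 = -(3:ℝ)/2 by norm_num] at hI
  rw [deriv_phase hVc hneg]
  refine ((hasDerivAt_id l).mul (hI.sub_const (2 * t))).deriv.trans ?_
  simp only [id]
  ring

theorem integral_sq_sub_rpow_le_integral_abs_rpow (hVc : Continuous V)
    (hneg : ∀ s, V s < 0) (hab : a ≤ b) {p : ℝ} (hp : p ≤ 0) (l : ℝ) :
    ∫ s in a..b, (l ^ 2 - V s) ^ p ≤ ∫ s in a..b, |V s| ^ p :=
  integral_mono_on hab ((continuous_sq_sub_rpow hVc hneg l p).intervalIntegrable _ _)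
    ((continuous_abs_rpow hVc hneg p).intervalIntegrable _ _) fun s _ =>
      Real.rpow_le_rpow_of_nonpos (abs_pos.2 (hneg s).ne) (abs_le_sq_sub hneg l s) hp

theorem half_sq_mul_integral_le_integral_sub (hVc : Continuous V)
    (hneg : ∀ s, V s < 0) (hab : a ≤ b) (l : ℝ) :
    l ^ 2 / 2 * ∫ s in a..b, |V s| * (l ^ 2 - V s) ^ (-(5:ℝ)/2) ≤
      (∫ s in a..b, |V s| ^ (-(1:ℝ)/2)) - ∫ s in a..b, (l ^ 2 - V s) ^ (-(1:ℝ)/2) := by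
  have hU := continuous_abs_rpow hVc hneg (-(1:ℝ)/2)
  have hB := continuous_sq_sub_rpow hVc hneg l (-(1:ℝ)/2)
  rw [← integral_const_mul, ← integral_sub (hU.intervalIntegrable _ _) (hB.intervalIntegrable _ _)]
  refine integral_mono_on hab ((continuous_const.mul (hVc.abs.mul
    (continuous_sq_sub_rpow hVc hneg l _))).intervalIntegrable _ _)
    ((hU.sub hB).intervalIntegrable _ _) fun s _ => ?_
  calc l ^ 2 / 2 * (|V s| * (l ^ 2 - V s) ^ (-(5:ℝ)/2))
      ≤ l ^ 2 / 2 * (l ^ 2 - V s) ^ (-(3:ℝ)/2) := by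
        have h := mul_rpow_sub_one_le_rpow (sq_sub_pos hneg l s) (abs_le_sq_sub hneg l s)
          (-(3:ℝ)/2)
        rw [show -(3:ℝ)/2 - 1 = -(5:ℝ)/2 by norm_num] at h
        gcongr
    _ ≤ |V s| ^ (-(1:ℝ)/2) - (l ^ 2 - V s) ^ (-(1:ℝ)/2) := by
        convert sub_div_two_mul_rpow_le_rpow_neg_half_sub (abs_pos.2 (hneg s).ne)
          (abs_le_sq_sub hneg l s) using 3
        rw [abs_of_neg (hneg s)]; ring

theorem integral_sub_le_half_sq_mul_integral (hVc : Continuous V)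
    (hneg : ∀ s, V s < 0) (hab : a ≤ b) (l : ℝ) :
    (∫ s in a..b, |V s| ^ (-(1:ℝ)/2)) - ∫ s in a..b, (l ^ 2 - V s) ^ (-(1:ℝ)/2) ≤
      l ^ 2 / 2 * ∫ s in a..b, |V s| ^ (-(3:ℝ)/2) := by
  have hU := continuous_abs_rpow hVc hneg (-(1:ℝ)/2)
  have hB := continuous_sq_sub_rpow hVc hneg l (-(1:ℝ)/2)
  rw [← integral_const_mul, ← integral_sub (hU.intervalIntegrable _ _) (hB.intervalIntegrable _ _)]
  refine integral_mono_on hab ((hU.sub hB).intervalIntegrable _ _)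
    ((continuous_const.mul (continuous_abs_rpow hVc hneg _)).intervalIntegrable _ _) fun s _ => ?_
  convert rpow_neg_half_sub_le_sub_div_two_mul_rpow (abs_pos.2 (hneg s).ne)
    (abs_le_sq_sub hneg l s) using 3
  rw [abs_of_neg (hneg s)]; ring

theorem le_neg_deriv_phase (hVc : Continuous V) (hneg : ∀ s, V s < 0) (hab : a ≤ b) (t : ℝ)
    {l : ℝ} (hl : 0 ≤ l) :
    l * (2 * t - (∫ s in a..b, |V s| ^ (-(1:ℝ)/2))
        + l ^ 2 / 2 * ∫ s in a..b, |V s| * (l ^ 2 - V s) ^ (-(5:ℝ)/2)) ≤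
      -deriv (fun l => -t * l ^ 2 + ∫ s in a..b, √(l ^ 2 - V s)) l := by
  have := half_sq_mul_integral_le_integral_sub hVc hneg hab l
  rw [deriv_phase hVc hneg, ← mul_neg]
  gcongr
  linarith

theorem abs_deriv_deriv_phase_le (hVc : Continuous V) (hneg : ∀ s, V s < 0) (hab : a ≤ b)
    {t : ℝ} (ht : ∫ s in a..b, |V s| ^ (-(1:ℝ)/2) ≤ 2 * t) (l : ℝ) :
    |deriv (deriv fun l => -t * l ^ 2 + ∫ s in a..b, √(l ^ 2 - V s)) l| ≤
      2 * t - (∫ s in a..b, |V s| ^ (-(1:ℝ)/2))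
        + 3 / 2 * l ^ 2 * ∫ s in a..b, |V s| ^ (-(3:ℝ)/2) := by
  have hI := integral_sub_le_half_sq_mul_integral hVc hneg hab l
  have hI_le := integral_sq_sub_rpow_le_integral_abs_rpow hVc hneg hab (p := -(1:ℝ)/2)
    (by norm_num) l
  have hJ_le := mul_le_mul_of_nonneg_left (integral_sq_sub_rpow_le_integral_abs_rpow hVc hneg
    hab (p := -(3:ℝ)/2) (by norm_num) l) (sq_nonneg l)
  have hJ_nonneg : 0 ≤ ∫ s in a..b, (l ^ 2 - V s) ^ (-(3:ℝ)/2) :=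
    integral_nonneg hab fun s _ => (Real.rpow_pos_of_pos (sq_sub_pos hneg l s) _).le
  rw [deriv_deriv_phase hVc hneg, abs_le]
  constructor <;> nlinarith [mul_nonneg (sq_nonneg l) hJ_nonneg]

end

theorem degenerate_phase_estimate_general (μ R : ℝ)
    (V : ℝ → ℝ) (hVc : Continuous V) (hneg : ∀ s, V s < 0)
    (t x x' c₂ : ℝ) (hxx' : x' < x) (hc₂ : 0 < c₂)
    (M₁ M₂ : ℝ)
    (hM₁ : M₁ = ∫ s in x'..x, |V s| ^ (-(1:ℝ)/2))
    (hM₂ : M₂ = ∫ s in x'..x, |V s| ^ (-(3:ℝ)/2))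
    (hlow2 : ∀ l : ℝ, 0 < l → l ≤ R * (1 + x^2) ^ (-(μ/4)) →
      c₂ * M₂ ≤ (∫ s in x'..x, |V s| * (l^2 - V s) ^ (-(5:ℝ)/2)) ∧
      (∫ s in x'..x, |V s| * (l^2 - V s) ^ (-(5:ℝ)/2)) ≤ M₂)
    (htM : M₁ / 2 < t) :
    let Φ : ℝ → ℝ := fun l => -t * l^2 + ∫ s in x'..x, Real.sqrt (l^2 - V s)
    let m : ℝ := 2 * c₂⁻¹ * (M₁ - 2*t) / M₂
    m < 0 ∧
    (∀ l : ℝ, 0 < l → l ≤ R * (1 + x^2) ^ (-(μ/4)) →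
      (c₂/2) * M₂ * l * (l^2 - m) ≤ |deriv Φ l|) ∧
    (∃ Cc > (0:ℝ), ∀ l : ℝ, 0 < l → l ≤ R * (1 + x^2) ^ (-(μ/4)) →
      |deriv (deriv Φ) l| ≤ Cc * M₂ * (l^2 + |m|)) := by
  intro Φ m
  have hM₂_pos : 0 < M₂ := hM₂ ▸ intervalIntegral_pos_of_pos
    ((continuous_abs_rpow hVc hneg _).intervalIntegrable _ _)
    (fun s => Real.rpow_pos_of_pos (abs_pos.2 (hneg s).ne) _) hxx'
  have hm : c₂ / 2 * M₂ * m = M₁ - 2 * t := by simp only [m]; field_simp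
  have hm_neg : m < 0 :=
    div_neg_of_neg_of_pos (mul_neg_of_pos_of_neg (by positivity) (by linarith)) hM₂_pos
  refine ⟨hm_neg, fun l hl hlK => ?_, ⟨(3 + c₂) / 2, by positivity, fun l _ _ => ?_⟩⟩
  · have hW := (hlow2 l hl hlK).1
    calc c₂ / 2 * M₂ * l * (l ^ 2 - m)
        = l * (2 * t - M₁ + l ^ 2 / 2 * (c₂ * M₂)) := by linear_combination -l * hm
      _ ≤ l * (2 * t - M₁ + l ^ 2 / 2 * ∫ s in x'..x, |V s| * (l ^ 2 - V s) ^ (-(5:ℝ)/2)) := by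
        gcongr
      _ ≤ -deriv Φ l := hM₁ ▸ le_neg_deriv_phase hVc hneg hxx'.le t hl.le
      _ ≤ |deriv Φ l| := neg_le_abs _
  · calc |deriv (deriv Φ) l| ≤ 2 * t - M₁ + 3 / 2 * l ^ 2 * M₂ :=
          hM₁ ▸ hM₂ ▸ abs_deriv_deriv_phase_le hVc hneg hxx'.le (by linarith) l
      _ = c₂ / 2 * M₂ * |m| + 3 / 2 * l ^ 2 * M₂ := by rw [abs_of_neg hm_neg]; linarith
      _ ≤ (3 + c₂) / 2 * M₂ * (l ^ 2 + |m|) := by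
        nlinarith [mul_nonneg (mul_nonneg hc₂.le hM₂_pos.le) (sq_nonneg l),
          mul_nonneg hM₂_pos.le (abs_nonneg m)]

/-- Degenerate phase estimate after the critical time: if `t > M₁/2`, then with
`m := 2c₂⁻¹(M₁-2t)/M₂ < 0` the phase `Φ(λ) = -tλ² + ∫_{x'}^x √(λ²-V)` satisfies
`|Φ'(λ)| ≥ (c₂/2) M₂ λ(λ² - m)` and `|Φ''(λ)| ≲ M₂(λ² + |m|)` on
`K = {0 < λ ≤ R⟨x⟩^{-μ/2}}`. -/
theorem degenerate_phase_estimate (μ R : ℝ) (hμ : μ ∈ Ioo (0:ℝ) 2) (hR : 1 ≤ R)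
    (V : ℝ → ℝ) (hVc : Continuous V) (hneg : ∀ s, V s < 0)
    (t x x' c₂ : ℝ) (ht : 0 < t) (hxx' : x' < x) (hxa : |x'| ≤ |x|) (hc₂ : 0 < c₂)
    (M₁ M₂ : ℝ)
    (hM₁ : M₁ = ∫ s in x'..x, |V s| ^ (-(1:ℝ)/2))
    (hM₂ : M₂ = ∫ s in x'..x, |V s| ^ (-(3:ℝ)/2))
    (hlow1 : ∀ l : ℝ, 0 < l → l ≤ R * (1 + x^2) ^ (-(μ/4)) →
      c₂ * M₁ ≤ (∫ s in x'..x, (l^2 - V s) ^ (-(1:ℝ)/2)) ∧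
      (∫ s in x'..x, (l^2 - V s) ^ (-(1:ℝ)/2)) ≤ M₁)
    (hlow2 : ∀ l : ℝ, 0 < l → l ≤ R * (1 + x^2) ^ (-(μ/4)) →
      c₂ * M₂ ≤ (∫ s in x'..x, |V s| * (l^2 - V s) ^ (-(5:ℝ)/2)) ∧
      (∫ s in x'..x, |V s| * (l^2 - V s) ^ (-(5:ℝ)/2)) ≤ M₂)
    (htM : M₁ / 2 < t) :
    let Φ : ℝ → ℝ := fun l => -t * l^2 + ∫ s in x'..x, Real.sqrt (l^2 - V s)
    let m : ℝ := 2 * c₂⁻¹ * (M₁ - 2*t) / M₂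
    m < 0 ∧
    (∀ l : ℝ, 0 < l → l ≤ R * (1 + x^2) ^ (-(μ/4)) →
      (c₂/2) * M₂ * l * (l^2 - m) ≤ |deriv Φ l|) ∧
    (∃ Cc > (0:ℝ), ∀ l : ℝ, 0 < l → l ≤ R * (1 + x^2) ^ (-(μ/4)) →
      |deriv (deriv Φ) l| ≤ Cc * M₂ * (l^2 + |m|)) :=
  degenerate_phase_estimate_general μ R V hVc hneg t x x' c₂ hxx' hc₂ M₁ M₂ hM₁ hM₂ hlow2 htM
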